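/- arXiv:1904.02143 — 2 statements merged into one kernel-verified Lean document; each statement's English description precedes it below -/
import Mathlib

section
/- One-dimensional weighted averaging preserves Hölder continuity: let a > −1 and α ∈ (0,1). If g : B₁⁺ → ℝ is α-Hölder continuous, then the function G(x,y) = y^{−1−a} ∫₀^y t^a (g(x,t) − g(x,0)) dt (extended by 0 at y = 0) is α-Hölder continuous on B_r⁺ for every r < 1, with Hölder seminorm bounded by c(a,α)·[g]_{C^{0,α}}. -/
open MeasureTheory Metric Real

abbrev Euc (n : ℕ) : Type := EuclideanSpace ℝ (Fin (n + 1))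

/-- The point `(x, t)` obtained from `z = (x, y)` by replacing the last coordinate by `t`. -/
noncomputable def setY {n : ℕ} (z : Euc n) (t : ℝ) : Euc n :=
  z + (t - z (Fin.last n)) • EuclideanSpace.single (Fin.last n) (1 : ℝ)

/-- The weighted one-dimensional average
`G(x,y) = y^{-1-a} ∫₀^y t^a (g(x,t) - g(x,0)) dt`, extended by `0` at `y = 0`. -/
noncomputable def Gop {n : ℕ} (a : ℝ) (g : Euc n → ℝ) (z : Euc n) : ℝ :=
  if z (Fin.last n) = 0 then 0 else
    (z (Fin.last n)) ^ (-(1 + a)) *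
      ∫ t in Set.Ioo (0 : ℝ) (z (Fin.last n)), t ^ a * (g (setY z t) - g (setY z 0))


open Set

lemma setY_apply {n : ℕ} (z : Euc n) (t : ℝ) (i : Fin (n+1)) :
    setY z t i = if i = Fin.last n then t else z i := by
  simp only [setY, PiLp.add_apply, PiLp.smul_apply, EuclideanSpace.single_apply, smul_eq_mul]
  split
  · subst i; ring
  · simp_all

lemma setY_sub_setY {n : ℕ} (z : Euc n) (s t : ℝ) :
    setY z t - setY z s = (t - s) • EuclideanSpace.single (Fin.last n) (1 : ℝ) := by
  simp only [setY]
  module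

lemma norm_smul_single (n : ℕ) (c : ℝ) :
    ‖c • EuclideanSpace.single (Fin.last n) (1 : ℝ)‖ = |c| := by
  rw [norm_smul, EuclideanSpace.norm_single]
  simp

lemma coord_abs_le_norm {n : ℕ} (v : Euc n) (i : Fin (n+1)) : |v i| ≤ ‖v‖ := by
  rw [EuclideanSpace.norm_eq]
  rw [show |v i| = Real.sqrt (‖v i‖ ^ 2) by rw [Real.sqrt_sq_eq_abs]; simp]
  apply Real.sqrt_le_sqrt
  exact Finset.single_le_sum (f := fun j => ‖v j‖ ^ 2) (fun j _ => by positivity) (Finset.mem_univ i)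

lemma norm_setY_le {n : ℕ} (z : Euc n) (t : ℝ) (h : |t| ≤ |z (Fin.last n)|) :
    ‖setY z t‖ ≤ ‖z‖ := by
  rw [EuclideanSpace.norm_eq, EuclideanSpace.norm_eq]
  apply Real.sqrt_le_sqrt
  rw [← Finset.sum_erase_add _ _ (Finset.mem_univ (Fin.last n)),
      ← Finset.sum_erase_add (Finset.univ) (fun j => ‖z j‖ ^ 2) (Finset.mem_univ (Fin.last n))]
  gcongr with i hi
  · rw [setY_apply]; simp [Finset.ne_of_mem_erase hi]
  · rw [setY_apply, if_pos rfl]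
    simpa using h


lemma setY_setY {n : ℕ} (z : Euc n) (s t : ℝ) : setY (setY z s) t = setY z t := by
  ext i
  rw [setY_apply, setY_apply, setY_apply]
  split <;> rfl

lemma norm_setY_sub_setY_le {n : ℕ} (z w : Euc n) (t : ℝ) :
    ‖setY z t - setY w t‖ ≤ ‖z - w‖ := by
  rw [EuclideanSpace.norm_eq, EuclideanSpace.norm_eq]
  apply Real.sqrt_le_sqrt
  rw [← Finset.sum_erase_add _ _ (Finset.mem_univ (Fin.last n)),
      ← Finset.sum_erase_add Finset.univ (fun j => ‖(z - w) j‖ ^ 2) (Finset.mem_univ (Fin.last n))]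
  have h1 : ∀ i, (setY z t - setY w t) i = setY z t i - setY w t i := fun i => rfl
  have h2 : ∀ i, (z - w) i = z i - w i := fun i => rfl
  refine add_le_add (le_of_eq (Finset.sum_congr rfl fun i hi => ?_)) ?_
  · rw [h1, setY_apply, setY_apply, h2]
    simp [Finset.ne_of_mem_erase hi]
  · rw [h1, setY_apply, setY_apply, if_pos rfl, if_pos rfl, sub_self]
    have h0 : ‖(0:ℝ)‖ = 0 := norm_zero
    rw [h0]
    simpa using pow_nonneg (norm_nonneg ((z - w) (Fin.last n))) 2

noncomputable def Fop (a : ℝ) (φ : ℝ → ℝ) (y : ℝ) : ℝ :=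
  if y = 0 then 0 else y ^ (-(1 + a)) * ∫ t in Set.Ioo (0 : ℝ) y, t ^ a * φ t

/-- value of the pure power integral -/
lemma int_rpow_Ioo {p : ℝ} (hp : -1 < p) {y : ℝ} (hy : 0 ≤ y) :
    ∫ t in Set.Ioo (0 : ℝ) y, t ^ p = y ^ (p + 1) / (p + 1) := by
  have h := integral_rpow (a := 0) (b := y) (Or.inl hp)
  rw [intervalIntegral.integral_of_le hy, integral_Ioc_eq_integral_Ioo] at h
  rw [h, Real.zero_rpow (by linarith), sub_zero]

lemma integrableOn_rpow_Ioo {p : ℝ} (hp : -1 < p) {y : ℝ} (hy : 0 ≤ y) :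
    IntegrableOn (fun t => t ^ p) (Set.Ioo (0 : ℝ) y) := by
  have := (intervalIntegral.intervalIntegrable_rpow' hp (a := 0) (b := y))
  rwa [intervalIntegrable_iff_integrableOn_Ioo_of_le hy] at this

lemma helper_pow2 {q t y : ℝ} (ht : 0 < t) (h1 : y/2 ≤ t) (h2 : t ≤ y) :
    t ^ q ≤ 2 ^ |q| * y ^ q := by
  have hy : 0 < y := lt_of_lt_of_le ht h2
  have h1le : (1:ℝ) ≤ 2 ^ |q| := by
    rw [show (1:ℝ) = (2:ℝ) ^ (0:ℝ) from (Real.rpow_zero 2).symm]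
    exact Real.rpow_le_rpow_of_exponent_le one_le_two (abs_nonneg q)
  rcases le_or_gt 0 q with hq | hq
  · calc t ^ q ≤ y ^ q := Real.rpow_le_rpow ht.le h2 hq
      _ ≤ 2 ^ |q| * y ^ q := le_mul_of_one_le_left (Real.rpow_nonneg hy.le q) h1le
  · calc t ^ q ≤ (y/2) ^ q := Real.rpow_le_rpow_of_nonpos (by positivity) h1 hq.le
      _ = 2 ^ |q| * y ^ q := by
          rw [Real.div_rpow hy.le (by norm_num : (0:ℝ) ≤ 2), abs_of_neg hq,
            Real.rpow_neg (by norm_num : (0:ℝ) ≤ 2)]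
          field_simp

lemma helper_delta {δ y β : ℝ} (hδ : 0 < δ) (hδy : δ ≤ y) (hβ : β ≤ 1) :
    δ * y ^ (β - 1) ≤ δ ^ β := by
  have hy : 0 < y := lt_of_lt_of_le hδ hδy
  have e1 : δ = δ ^ β * δ ^ (1 - β) := by
    rw [← Real.rpow_add hδ]; ring_nf; rw [Real.rpow_one]
  have e2 : y ^ (β - 1) = (y ^ (1 - β))⁻¹ := by
    rw [← Real.rpow_neg hy.le]; ring_nf
  calc δ * y ^ (β - 1) = δ ^ β * (δ ^ (1 - β) * (y ^ (1 - β))⁻¹) := by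
        rw [e2]; nth_rw 1 [e1]; ring
    _ ≤ δ ^ β * 1 := by
        apply mul_le_mul_of_nonneg_left _ (Real.rpow_nonneg hδ.le β)
        rw [← div_eq_mul_inv]
        exact div_le_one_of_le₀ (Real.rpow_le_rpow hδ.le hδy (by linarith))
          (Real.rpow_nonneg hy.le _)
    _ = δ ^ β := mul_one _


section oneD

variable {a α K Y : ℝ} {φ : ℝ → ℝ}
  (ha : -1 < a) (hα : α ∈ Set.Ioo (0 : ℝ) 1) (hK : 0 ≤ K)
  (hb : ∀ t ∈ Set.Icc 0 Y, |φ t| ≤ K * t ^ α)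
  (hc : ContinuousOn φ (Set.Icc 0 Y))

include ha hα hK hb hc

lemma oneD_integrable {y : ℝ} (hy0 : 0 ≤ y) (hyY : y ≤ Y) :
    IntegrableOn (fun t => t ^ a * φ t) (Set.Ioo (0 : ℝ) y) := by
  have hmeas : AEStronglyMeasurable (fun t => t ^ a * φ t)
      (volume.restrict (Set.Ioo (0 : ℝ) y)) := by
    apply ContinuousOn.aestronglyMeasurable _ measurableSet_Ioo
    apply ContinuousOn.mul
    · exact fun t ht => (Real.continuousAt_rpow_const t a (Or.inl (ne_of_gt ht.1))).continuousWithinAt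
    · exact hc.mono (fun t ht => ⟨ht.1.le, ht.2.le.trans hyY⟩)
  apply Integrable.mono' ((integrableOn_rpow_Ioo (p := a + α) (by linarith [hα.1]) hy0).const_mul K) hmeas
  filter_upwards [ae_restrict_mem measurableSet_Ioo] with t ht
  have ht0 : (0:ℝ) < t := ht.1
  rw [Real.norm_eq_abs, abs_mul, abs_of_nonneg (Real.rpow_nonneg ht0.le a)]
  calc t ^ a * |φ t| ≤ t ^ a * (K * t ^ α) := by
        apply mul_le_mul_of_nonneg_left (hb t ⟨ht0.le, ht.2.le.trans hyY⟩)
          (Real.rpow_nonneg ht0.le a)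
    _ = K * t ^ (a + α) := by rw [Real.rpow_add ht0]; ring

lemma oneD_int_bound {y : ℝ} (hy0 : 0 ≤ y) (hyY : y ≤ Y) :
    |∫ t in Set.Ioo (0 : ℝ) y, t ^ a * φ t| ≤ K * y ^ (a + α + 1) / (a + α + 1) := by
  have hplt : (-1:ℝ) < a + α := by linarith [hα.1]
  have h1 : |∫ t in Set.Ioo (0 : ℝ) y, t ^ a * φ t| ≤
      ∫ t in Set.Ioo (0 : ℝ) y, K * t ^ (a + α) := by
    rw [← Real.norm_eq_abs]
    apply norm_integral_le_of_norm_le ((integrableOn_rpow_Ioo hplt hy0).const_mul K)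
    filter_upwards [ae_restrict_mem measurableSet_Ioo] with t ht
    have ht0 : (0:ℝ) < t := ht.1
    rw [Real.norm_eq_abs, abs_mul, abs_of_nonneg (Real.rpow_nonneg ht0.le a)]
    calc t ^ a * |φ t| ≤ t ^ a * (K * t ^ α) := by
          apply mul_le_mul_of_nonneg_left (hb t ⟨ht0.le, ht.2.le.trans hyY⟩)
            (Real.rpow_nonneg ht0.le a)
      _ = K * t ^ (a + α) := by rw [Real.rpow_add ht0]; ring
  rw [MeasureTheory.integral_const_mul, int_rpow_Ioo hplt hy0] at h1
  calc |∫ t in Set.Ioo (0 : ℝ) y, t ^ a * φ t| ≤ K * (y ^ (a + α + 1) / (a + α + 1)) := h1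
    _ = K * y ^ (a + α + 1) / (a + α + 1) := by ring

lemma oneD_abs_Fop {y : ℝ} (hy0 : 0 ≤ y) (hyY : y ≤ Y) :
    |Fop a φ y| ≤ K / (1 + a + α) * y ^ α := by
  rcases eq_or_lt_of_le hy0 with h | hy0'
  · subst h
    simp [Fop, Real.zero_rpow (ne_of_gt hα.1)]
  have hs : (0:ℝ) < 1 + a + α := by linarith [hα.1]
  rw [Fop, if_neg (ne_of_gt hy0'), abs_mul,
    abs_of_nonneg (Real.rpow_nonneg hy0 _)]
  calc y ^ (-(1+a)) * |∫ t in Set.Ioo (0 : ℝ) y, t ^ a * φ t|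
      ≤ y ^ (-(1+a)) * (K * y ^ (a + α + 1) / (a + α + 1)) := by
        exact mul_le_mul_of_nonneg_left (oneD_int_bound ha hα hK hb hc hy0 hyY)
          (Real.rpow_nonneg hy0 _)
    _ = K / (1 + a + α) * (y ^ (-(1+a)) * y ^ (a + α + 1)) := by ring_nf
    _ = K / (1 + a + α) * y ^ α := by
        rw [← Real.rpow_add hy0']; ring_nf

lemma oneD_horiz {ψ : ℝ → ℝ} (hbψ : ∀ t ∈ Set.Icc 0 Y, |ψ t| ≤ K * t ^ α)
    (hcψ : ContinuousOn ψ (Set.Icc 0 Y)) {M : ℝ} (hM : 0 ≤ M) {y : ℝ}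
    (hy0 : 0 ≤ y) (hyY : y ≤ Y) (hd : ∀ t ∈ Set.Icc 0 y, |φ t - ψ t| ≤ M) :
    |Fop a φ y - Fop a ψ y| ≤ M / (1 + a) := by
  have hp : (0:ℝ) < 1 + a := by linarith
  rcases eq_or_lt_of_le hy0 with h | hy0'
  · subst h
    have : Fop a φ 0 = 0 := by simp [Fop]
    have h2 : Fop a ψ 0 = 0 := by simp [Fop]
    rw [this, h2, sub_self, abs_zero]
    positivity
  have i1 := oneD_integrable ha hα hK hb hc hy0 hyY
  have i2 := oneD_integrable ha hα hK hbψ hcψ hy0 hyY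
  rw [Fop, if_neg (ne_of_gt hy0'), Fop, if_neg (ne_of_gt hy0'), ← mul_sub,
    ← MeasureTheory.integral_sub i1 i2, abs_mul, abs_of_nonneg (Real.rpow_nonneg hy0 _)]
  have hbound : |∫ t in Set.Ioo (0:ℝ) y, (t ^ a * φ t - t ^ a * ψ t)| ≤
      ∫ t in Set.Ioo (0:ℝ) y, M * t ^ a := by
    rw [← Real.norm_eq_abs]
    apply norm_integral_le_of_norm_le ((integrableOn_rpow_Ioo (p := a) ha hy0).const_mul M)
    filter_upwards [ae_restrict_mem measurableSet_Ioo] with t ht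
    have ht0 : (0:ℝ) < t := ht.1
    rw [Real.norm_eq_abs, ← mul_sub, abs_mul, abs_of_nonneg (Real.rpow_nonneg ht0.le a)]
    calc t ^ a * |φ t - ψ t| ≤ t ^ a * M :=
          mul_le_mul_of_nonneg_left (hd t ⟨ht0.le, ht.2.le⟩) (Real.rpow_nonneg ht0.le a)
      _ = M * t ^ a := mul_comm _ _
  rw [MeasureTheory.integral_const_mul, int_rpow_Ioo ha hy0] at hbound
  calc y ^ (-(1+a)) * |∫ t in Set.Ioo (0:ℝ) y, (t ^ a * φ t - t ^ a * ψ t)|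
      ≤ y ^ (-(1+a)) * (M * (y ^ (a+1) / (a+1))) :=
        mul_le_mul_of_nonneg_left hbound (Real.rpow_nonneg hy0 _)
    _ = M / (1 + a) * (y ^ (-(1+a)) * y ^ (a+1)) := by ring
    _ = M / (1 + a) := by
        rw [← Real.rpow_add hy0', show -(1+a) + (a+1) = (0:ℝ) by ring, Real.rpow_zero, mul_one]

lemma oneD_vert {y₁ y₂ : ℝ} (h0 : 0 ≤ y₁) (h12 : y₁ ≤ y₂) (h2Y : y₂ ≤ Y) :
    |Fop a φ y₂ - Fop a φ y₁| ≤
      (2 ^ |a + α| + (1 + a) / (1 + a + α) + 2 * 2 ^ α / (1 + a + α)) * K * (y₂ - y₁) ^ α := by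
  obtain ⟨hα0, hα1⟩ := hα
  have hs : (0:ℝ) < 1 + a + α := by linarith
  have hp : (0:ℝ) < 1 + a := by linarith
  rcases eq_or_lt_of_le h12 with h | h12'
  · subst h; simp [Real.zero_rpow (ne_of_gt hα0)]
  set δ := y₂ - y₁ with hδdef
  have hδ : 0 < δ := by simp [hδdef]; linarith
  have hy2 : 0 < y₂ := lt_of_le_of_lt h0 h12'
  have habs2 : 0 ≤ (2:ℝ) ^ |a + α| := by positivity
  rcases le_or_gt y₂ (2 * δ) with hcase | hcase
  · -- far case: y₂ ≤ 2δ
    have b2 := oneD_abs_Fop ha ⟨hα0, hα1⟩ hK hb hc hy2.le h2Y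
    have b1 := oneD_abs_Fop ha ⟨hα0, hα1⟩ hK hb hc h0 (le_trans h12 h2Y)
    have htw : y₁ ^ α ≤ (2 * δ) ^ α := Real.rpow_le_rpow h0 (le_trans h12 hcase) hα0.le
    have htw2 : y₂ ^ α ≤ (2 * δ) ^ α := Real.rpow_le_rpow hy2.le hcase hα0.le
    have hmr : (2 * δ) ^ α = 2 ^ α * δ ^ α := Real.mul_rpow (by norm_num) hδ.le
    have hKd : 0 ≤ K / (1 + a + α) := by positivity
    have extra : 0 ≤ (2 ^ |a + α| + (1 + a) / (1 + a + α)) * (K * δ ^ α) := by positivity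
    calc |Fop a φ y₂ - Fop a φ y₁| ≤ |Fop a φ y₂| + |Fop a φ y₁| := abs_sub _ _
      _ ≤ K / (1+a+α) * y₂ ^ α + K / (1+a+α) * y₁ ^ α := add_le_add b2 b1
      _ ≤ K / (1+a+α) * (2 ^ α * δ ^ α) + K / (1+a+α) * (2 ^ α * δ ^ α) := by
          rw [← hmr]; exact add_le_add (mul_le_mul_of_nonneg_left htw2 hKd)
            (mul_le_mul_of_nonneg_left htw hKd)
      _ = 2 * 2 ^ α / (1+a+α) * K * δ ^ α := by ring
      _ ≤ (2 ^ |a + α| + (1 + a) / (1 + a + α) + 2 * 2 ^ α / (1 + a + α)) * K * δ ^ α := by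
          nlinarith [extra]
  · -- near case: 2δ < y₂, so y₁ > δ > 0
    have hy1 : δ < y₁ := by simp only [hδdef] at *; linarith
    have hy1pos : 0 < y₁ := lt_trans hδ hy1
    have hhalf : y₂ / 2 ≤ y₁ := by simp only [hδdef] at hcase ⊢; linarith
    have hint2 : IntegrableOn (fun t => t ^ a * φ t) (Set.Ioo 0 y₂) :=
      oneD_integrable ha ⟨hα0, hα1⟩ hK hb hc hy2.le h2Y
    have hintJ1 : IntegrableOn (fun t => t ^ a * φ t) (Set.Ioo 0 y₁) :=
      hint2.mono_set (Set.Ioo_subset_Ioo le_rfl h12)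
    have hintJ2 : IntegrableOn (fun t => t ^ a * φ t) (Set.Ico y₁ y₂) :=
      hint2.mono_set (fun t ht => ⟨lt_of_lt_of_le hy1pos ht.1, ht.2⟩)
    set J1 := ∫ t in Set.Ioo (0:ℝ) y₁, t ^ a * φ t with hJ1
    set J2 := ∫ t in Set.Ioo y₁ y₂, t ^ a * φ t with hJ2
    have hsplit : ∫ t in Set.Ioo (0:ℝ) y₂, t ^ a * φ t = J1 + J2 := by
      rw [← Set.Ioo_union_Ico_eq_Ioo hy1pos h12,
        MeasureTheory.setIntegral_union
          (Set.disjoint_left.mpr fun x hx1 hx2 => absurd hx1.2 (not_lt.mpr hx2.1))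
          measurableSet_Ico hintJ1 hintJ2,
        MeasureTheory.integral_Ico_eq_integral_Ioo]
    have key : Fop a φ y₂ - Fop a φ y₁ =
        (y₂ ^ (-(1+a)) - y₁ ^ (-(1+a))) * J1 + y₂ ^ (-(1+a)) * J2 := by
      rw [Fop, if_neg (ne_of_gt hy2), Fop, if_neg (ne_of_gt hy1pos), hsplit, ← hJ1]
      ring
    -- MVT bound
    have hder : ∀ x ∈ Set.Icc y₁ y₂, HasDerivWithinAt (fun x : ℝ => x ^ (-(1+a)))
        (-(1+a) * x ^ (-(1+a) - 1)) (Set.Icc y₁ y₂) x := fun x hx =>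
      (Real.hasDerivAt_rpow_const (Or.inl (ne_of_gt (lt_of_lt_of_le hy1pos hx.1)))).hasDerivWithinAt
    have hbd : ∀ x ∈ Set.Icc y₁ y₂, ‖-(1+a) * x ^ (-(1+a) - 1)‖ ≤ (1+a) * y₁ ^ (-(1+a) - 1) := by
      intro x hx
      have hx0 : 0 < x := lt_of_lt_of_le hy1pos hx.1
      rw [Real.norm_eq_abs, abs_mul, abs_neg, abs_of_pos hp,
        abs_of_nonneg (Real.rpow_nonneg hx0.le _)]
      exact mul_le_mul_of_nonneg_left
        (Real.rpow_le_rpow_of_nonpos hy1pos hx.1 (by linarith)) hp.le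
    have mvt : |y₂ ^ (-(1+a)) - y₁ ^ (-(1+a))| ≤ (1+a) * y₁ ^ (-(1+a) - 1) * δ := by
      have := (convex_Icc y₁ y₂).norm_image_sub_le_of_norm_hasDerivWithin_le hder hbd
        ⟨le_rfl, h12⟩ ⟨h12, le_rfl⟩
      rw [Real.norm_eq_abs, Real.norm_eq_abs, abs_of_pos hδ] at this
      exact this
    -- J1 bound
    have hJ1b : |J1| ≤ K * y₁ ^ (a + α + 1) / (a + α + 1) :=
      oneD_int_bound ha ⟨hα0, hα1⟩ hK hb hc hy1pos.le (le_trans h12 h2Y)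
    -- J2 bound
    have hJ2b : |J2| ≤ K * 2 ^ |a + α| * y₂ ^ (a + α) * δ := by
      have := norm_setIntegral_le_of_norm_le_const (μ := volume) (s := Set.Ioo y₁ y₂)
        (f := fun t => t ^ a * φ t) (C := K * 2 ^ |a + α| * y₂ ^ (a + α))
        (by rw [Real.volume_Ioo]; exact ENNReal.ofReal_lt_top) ?_
      · rw [measureReal_def, Real.volume_Ioo, ENNReal.toReal_ofReal hδ.le] at this
        exact this
      · intro t ht
        have ht0 : 0 < t := lt_trans hy1pos ht.1
        have htY : t ≤ Y := le_trans ht.2.le h2Y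
        rw [Real.norm_eq_abs]
        rw [abs_mul, abs_of_nonneg (Real.rpow_nonneg ht0.le a)]
        calc t ^ a * |φ t| ≤ t ^ a * (K * t ^ α) :=
              mul_le_mul_of_nonneg_left (hb t ⟨ht0.le, htY⟩) (Real.rpow_nonneg ht0.le a)
          _ = K * t ^ (a + α) := by rw [Real.rpow_add ht0]; ring
          _ ≤ K * (2 ^ |a + α| * y₂ ^ (a + α)) := by
              apply mul_le_mul_of_nonneg_left _ hK
              exact helper_pow2 ht0 (le_trans hhalf ht.1.le) ht.2.le
          _ = K * 2 ^ |a + α| * y₂ ^ (a + α) := by ring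
    -- assemble
    have expo1 : y₁ ^ (-(1+a) - 1) * y₁ ^ (a + α + 1) = y₁ ^ (α - 1) := by
      rw [← Real.rpow_add hy1pos]; ring_nf
    have expo2 : y₂ ^ (-(1+a)) * y₂ ^ (a + α) = y₂ ^ (α - 1) := by
      rw [← Real.rpow_add hy2]; ring_nf
    have hd1 : δ * y₁ ^ (α - 1) ≤ δ ^ α := helper_delta hδ hy1.le hα1.le
    have hd2 : δ * y₂ ^ (α - 1) ≤ δ ^ α := helper_delta hδ (by simp only [hδdef]; linarith) hα1.le
    have termA : |y₂ ^ (-(1+a)) - y₁ ^ (-(1+a))| * |J1| ≤ (1+a)/(1+a+α) * K * δ ^ α := by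
      calc |y₂ ^ (-(1+a)) - y₁ ^ (-(1+a))| * |J1|
          ≤ ((1+a) * y₁ ^ (-(1+a) - 1) * δ) * (K * y₁ ^ (a + α + 1) / (a + α + 1)) := by
            apply mul_le_mul mvt hJ1b (abs_nonneg _)
            positivity
        _ = (1+a)/(1+a+α) * K * (δ * (y₁ ^ (-(1+a) - 1) * y₁ ^ (a + α + 1))) := by
            rw [show a + α + 1 = 1 + a + α by ring]; ring
        _ = (1+a)/(1+a+α) * K * (δ * y₁ ^ (α - 1)) := by rw [expo1]
        _ ≤ (1+a)/(1+a+α) * K * δ ^ α := by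
            apply mul_le_mul_of_nonneg_left hd1; positivity
    have termB : y₂ ^ (-(1+a)) * |J2| ≤ 2 ^ |a + α| * K * δ ^ α := by
      calc y₂ ^ (-(1+a)) * |J2|
          ≤ y₂ ^ (-(1+a)) * (K * 2 ^ |a + α| * y₂ ^ (a + α) * δ) :=
            mul_le_mul_of_nonneg_left hJ2b (Real.rpow_nonneg hy2.le _)
        _ = 2 ^ |a + α| * K * (δ * (y₂ ^ (-(1+a)) * y₂ ^ (a + α))) := by ring
        _ = 2 ^ |a + α| * K * (δ * y₂ ^ (α - 1)) := by rw [expo2]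
        _ ≤ 2 ^ |a + α| * K * δ ^ α := by
            apply mul_le_mul_of_nonneg_left hd2; positivity
    have extra : 0 ≤ 2 * 2 ^ α / (1 + a + α) * (K * δ ^ α) := by positivity
    calc |Fop a φ y₂ - Fop a φ y₁|
        = |(y₂ ^ (-(1+a)) - y₁ ^ (-(1+a))) * J1 + y₂ ^ (-(1+a)) * J2| := by rw [key]
      _ ≤ |y₂ ^ (-(1+a)) - y₁ ^ (-(1+a))| * |J1| + y₂ ^ (-(1+a)) * |J2| := by
          refine le_trans (abs_add_le _ _) ?_
          rw [abs_mul, abs_mul, abs_of_nonneg (Real.rpow_nonneg hy2.le (-(1+a)))]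
      _ ≤ (1+a)/(1+a+α) * K * δ ^ α + 2 ^ |a + α| * K * δ ^ α := add_le_add termA termB
      _ ≤ (2 ^ |a + α| + (1 + a) / (1 + a + α) + 2 * 2 ^ α / (1 + a + α)) * K * δ ^ α := by
          nlinarith [extra]

end oneD


lemma continuousOn_of_holder {f : ℝ → ℝ} {s : Set ℝ} {K α : ℝ} (hα : 0 < α) (hK : 0 ≤ K)
    (h : ∀ x ∈ s, ∀ y ∈ s, |f x - f y| ≤ K * |x - y| ^ α) : ContinuousOn f s := by
  rw [Metric.continuousOn_iff]
  intro b hb ε hε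
  have hK1 : (0:ℝ) < K + 1 := by linarith
  refine ⟨(ε/(K+1)) ^ (1/α), by positivity, fun x hx hdist => ?_⟩
  have key : ((ε/(K+1)) ^ (1/α)) ^ α = ε/(K+1) := by
    rw [← Real.rpow_mul (by positivity), one_div, inv_mul_cancel₀ (ne_of_gt hα), Real.rpow_one]
  calc dist (f x) (f b) = |f x - f b| := Real.dist_eq _ _
    _ ≤ K * |x - b| ^ α := h x hx b hb
    _ ≤ K * ((ε/(K+1)) ^ (1/α)) ^ α := by
        apply mul_le_mul_of_nonneg_left _ hK
        apply Real.rpow_le_rpow (abs_nonneg _) _ hα.le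
        rw [← Real.dist_eq]; exact hdist.le
    _ = K * (ε/(K+1)) := by rw [key]
    _ < (K+1) * (ε/(K+1)) := mul_lt_mul_of_pos_right (by linarith) (by positivity)
    _ = ε := by field_simp

lemma norm_setY_sub_setY_same {n : ℕ} (u : Euc n) (s t : ℝ) :
    ‖setY u s - setY u t‖ = |s - t| := by
  rw [setY_sub_setY, norm_smul_single]

lemma setY_mem {n : ℕ} {u : Euc n}
    (hu : u ∈ ball (0 : Euc n) 1 ∩ {z : Euc n | 0 ≤ z (Fin.last n)})
    {t : ℝ} (ht : t ∈ Set.Icc 0 (u (Fin.last n))) :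
    setY u t ∈ ball (0 : Euc n) 1 ∩ {z : Euc n | 0 ≤ z (Fin.last n)} := by
  obtain ⟨hu1, hu2⟩ := hu
  refine ⟨?_, ?_⟩
  · rw [mem_ball_zero_iff] at hu1 ⊢
    refine lt_of_le_of_lt (norm_setY_le u t ?_) hu1
    rw [abs_of_nonneg ht.1, abs_of_nonneg hu2]; exact ht.2
  · show 0 ≤ setY u t (Fin.last n)
    rw [setY_apply, if_pos rfl]; exact ht.1

lemma phi_bound {n : ℕ} {g : Euc n → ℝ} {K α : ℝ} (hα0 : 0 < α)
    (hg : ∀ z ∈ ball (0 : Euc n) 1 ∩ {z : Euc n | 0 ≤ z (Fin.last n)},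
        ∀ w ∈ ball (0 : Euc n) 1 ∩ {z : Euc n | 0 ≤ z (Fin.last n)},
          |g z - g w| ≤ K * ‖z - w‖ ^ α)
    {u : Euc n} (hu : u ∈ ball (0 : Euc n) 1 ∩ {z : Euc n | 0 ≤ z (Fin.last n)}) :
    ∀ t ∈ Set.Icc 0 (u (Fin.last n)), |g (setY u t) - g (setY u 0)| ≤ K * t ^ α := by
  intro t ht
  have h0 : (0:ℝ) ∈ Set.Icc 0 (u (Fin.last n)) := ⟨le_rfl, hu.2⟩
  have := hg _ (setY_mem hu ht) _ (setY_mem hu h0)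
  rwa [norm_setY_sub_setY_same, sub_zero, abs_of_nonneg ht.1] at this

lemma phi_cont {n : ℕ} {g : Euc n → ℝ} {K α : ℝ} (hα0 : 0 < α) (hK : 0 ≤ K)
    (hg : ∀ z ∈ ball (0 : Euc n) 1 ∩ {z : Euc n | 0 ≤ z (Fin.last n)},
        ∀ w ∈ ball (0 : Euc n) 1 ∩ {z : Euc n | 0 ≤ z (Fin.last n)},
          |g z - g w| ≤ K * ‖z - w‖ ^ α)
    {u : Euc n} (hu : u ∈ ball (0 : Euc n) 1 ∩ {z : Euc n | 0 ≤ z (Fin.last n)}) :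
    ContinuousOn (fun t => g (setY u t) - g (setY u 0)) (Set.Icc 0 (u (Fin.last n))) := by
  apply continuousOn_of_holder hα0 hK
  intro s hs t ht
  have e : g (setY u s) - g (setY u 0) - (g (setY u t) - g (setY u 0))
      = g (setY u s) - g (setY u t) := by ring
  rw [e]
  have := hg _ (setY_mem hu hs) _ (setY_mem hu ht)
  rwa [norm_setY_sub_setY_same] at this

lemma main_aux {n : ℕ} {a α : ℝ} (ha : -1 < a) (hα : α ∈ Set.Ioo (0:ℝ) 1)
    (g : Euc n → ℝ) (K : ℝ) (hK : 0 ≤ K)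
    (hg : ∀ z ∈ ball (0 : Euc n) 1 ∩ {z : Euc n | 0 ≤ z (Fin.last n)},
        ∀ w ∈ ball (0 : Euc n) 1 ∩ {z : Euc n | 0 ≤ z (Fin.last n)},
          |g z - g w| ≤ K * ‖z - w‖ ^ α)
    {z w : Euc n}
    (hz : z ∈ ball (0 : Euc n) 1 ∩ {z : Euc n | 0 ≤ z (Fin.last n)})
    (hw : w ∈ ball (0 : Euc n) 1 ∩ {z : Euc n | 0 ≤ z (Fin.last n)})
    (hy : z (Fin.last n) ≤ w (Fin.last n)) :
    |Gop a g z - Gop a g w| ≤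
      (2/(1+a) + (2 ^ |a + α| + (1 + a)/(1 + a + α) + 2 * 2 ^ α/(1 + a + α))) * K
        * ‖z - w‖ ^ α := by
  obtain ⟨hα0, hα1⟩ := hα
  have hp : (0:ℝ) < 1 + a := by linarith
  have hz0 : 0 ≤ z (Fin.last n) := hz.2
  have hw0 : 0 ≤ w (Fin.last n) := hw.2
  have hm : setY w (z (Fin.last n)) ∈
      ball (0 : Euc n) 1 ∩ {z : Euc n | 0 ≤ z (Fin.last n)} := setY_mem hw ⟨hz0, hy⟩
  have hmlast : (setY w (z (Fin.last n))) (Fin.last n) = z (Fin.last n) := by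
    rw [setY_apply, if_pos rfl]
  -- identify the three Gop values as Fop values
  have hGz : Gop a g z = Fop a (fun t => g (setY z t) - g (setY z 0)) (z (Fin.last n)) := rfl
  have hGw : Gop a g w = Fop a (fun t => g (setY w t) - g (setY w 0)) (w (Fin.last n)) := rfl
  have hGm : Gop a g (setY w (z (Fin.last n)))
      = Fop a (fun t => g (setY w t) - g (setY w 0)) (z (Fin.last n)) := by
    have h1 : Gop a g (setY w (z (Fin.last n)))
        = Fop a (fun t => g (setY (setY w (z (Fin.last n))) t)
            - g (setY (setY w (z (Fin.last n))) 0)) ((setY w (z (Fin.last n))) (Fin.last n)) := rfl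
    rw [h1, hmlast]
    congr 1
    funext t
    rw [setY_setY, setY_setY]
  -- Hölder data for the φ's
  have hbz := phi_bound hα0 hg hz
  have hcz := phi_cont hα0 hK hg hz
  have hbw := phi_bound hα0 hg hw
  have hcw := phi_cont hα0 hK hg hw
  have hbw' : ∀ t ∈ Set.Icc 0 (z (Fin.last n)),
      |g (setY w t) - g (setY w 0)| ≤ K * t ^ α :=
    fun t ht => hbw t ⟨ht.1, le_trans ht.2 hy⟩
  have hcw' : ContinuousOn (fun t => g (setY w t) - g (setY w 0))
      (Set.Icc 0 (z (Fin.last n))) :=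
    hcw.mono (Set.Icc_subset_Icc le_rfl hy)
  -- horizontal estimate
  have hd : ∀ t ∈ Set.Icc 0 (z (Fin.last n)),
      |(g (setY z t) - g (setY z 0)) - (g (setY w t) - g (setY w 0))|
        ≤ 2 * (K * ‖z - w‖ ^ α) := by
    intro t ht
    have hts : t ∈ Set.Icc 0 (w (Fin.last n)) := ⟨ht.1, le_trans ht.2 hy⟩
    have h0z : (0:ℝ) ∈ Set.Icc 0 (z (Fin.last n)) := ⟨le_rfl, hz0⟩
    have h0w : (0:ℝ) ∈ Set.Icc 0 (w (Fin.last n)) := ⟨le_rfl, hw0⟩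
    have b1 : |g (setY z t) - g (setY w t)| ≤ K * ‖z - w‖ ^ α := by
      refine le_trans (hg _ (setY_mem hz ht) _ (setY_mem hw hts)) ?_
      exact mul_le_mul_of_nonneg_left
        (Real.rpow_le_rpow (norm_nonneg _) (norm_setY_sub_setY_le z w t) hα0.le) hK
    have b2 : |g (setY z 0) - g (setY w 0)| ≤ K * ‖z - w‖ ^ α := by
      refine le_trans (hg _ (setY_mem hz h0z) _ (setY_mem hw h0w)) ?_
      exact mul_le_mul_of_nonneg_left
        (Real.rpow_le_rpow (norm_nonneg _) (norm_setY_sub_setY_le z w 0) hα0.le) hK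
    calc |(g (setY z t) - g (setY z 0)) - (g (setY w t) - g (setY w 0))|
        = |(g (setY z t) - g (setY w t)) - (g (setY z 0) - g (setY w 0))| := by ring_nf
      _ ≤ |g (setY z t) - g (setY w t)| + |g (setY z 0) - g (setY w 0)| := abs_sub _ _
      _ ≤ 2 * (K * ‖z - w‖ ^ α) := by linarith
  have hhor : |Fop a (fun t => g (setY z t) - g (setY z 0)) (z (Fin.last n))
      - Fop a (fun t => g (setY w t) - g (setY w 0)) (z (Fin.last n))|
        ≤ 2 * (K * ‖z - w‖ ^ α) / (1 + a) :=
    oneD_horiz ha ⟨hα0, hα1⟩ hK hbz hcz hbw' hcw' (by positivity) hz0 le_rfl hd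
  -- vertical estimate
  have hver : |Fop a (fun t => g (setY w t) - g (setY w 0)) (w (Fin.last n))
      - Fop a (fun t => g (setY w t) - g (setY w 0)) (z (Fin.last n))|
        ≤ (2 ^ |a + α| + (1 + a)/(1 + a + α) + 2 * 2 ^ α/(1 + a + α)) * K
          * (w (Fin.last n) - z (Fin.last n)) ^ α :=
    oneD_vert ha ⟨hα0, hα1⟩ hK hbw hcw hz0 hy le_rfl
  have hcoord : w (Fin.last n) - z (Fin.last n) ≤ ‖z - w‖ := by
    have h1 : (w - z) (Fin.last n) = w (Fin.last n) - z (Fin.last n) := rfl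
    calc w (Fin.last n) - z (Fin.last n) = |(w - z) (Fin.last n)| := by
          rw [h1, abs_of_nonneg (by linarith)]
      _ ≤ ‖w - z‖ := coord_abs_le_norm _ _
      _ = ‖z - w‖ := norm_sub_rev _ _
  have hver' : |Fop a (fun t => g (setY w t) - g (setY w 0)) (w (Fin.last n))
      - Fop a (fun t => g (setY w t) - g (setY w 0)) (z (Fin.last n))|
        ≤ (2 ^ |a + α| + (1 + a)/(1 + a + α) + 2 * 2 ^ α/(1 + a + α)) * K * ‖z - w‖ ^ α := by
    refine le_trans hver (mul_le_mul_of_nonneg_left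
      (Real.rpow_le_rpow (by linarith) hcoord hα0.le) ?_)
    positivity
  calc |Gop a g z - Gop a g w|
      ≤ |Gop a g z - Gop a g (setY w (z (Fin.last n)))|
        + |Gop a g (setY w (z (Fin.last n))) - Gop a g w| := abs_sub_le _ _ _
    _ ≤ 2 * (K * ‖z - w‖ ^ α) / (1 + a)
        + (2 ^ |a + α| + (1 + a)/(1 + a + α) + 2 * 2 ^ α/(1 + a + α)) * K * ‖z - w‖ ^ α := by
        rw [hGz, hGw, hGm]
        refine add_le_add hhor ?_
        rw [abs_sub_comm]
        exact hver'
    _ = (2/(1+a) + (2 ^ |a + α| + (1 + a)/(1 + a + α) + 2 * 2 ^ α/(1 + a + α))) * K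
        * ‖z - w‖ ^ α := by ring

/-- for `a > -1` and `α ∈ (0,1)`, there is a constant `c = c(a,α)` such
that whenever `g` is `α`-Hölder on `B₁⁺` with seminorm `K`, the weighted average `Gop`
is `α`-Hölder on `B_r⁺` for every `r < 1`, with seminorm at most `c·K`. -/
theorem stmt14 (n : ℕ) (a : ℝ) (ha : -1 < a) (α : ℝ) (hα : α ∈ Set.Ioo (0 : ℝ) 1) :
    ∃ c : ℝ, ∀ (g : Euc n → ℝ) (K : ℝ), 0 ≤ K →
      (∀ z ∈ ball (0 : Euc n) 1 ∩ {z : Euc n | 0 ≤ z (Fin.last n)},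
        ∀ w ∈ ball (0 : Euc n) 1 ∩ {z : Euc n | 0 ≤ z (Fin.last n)},
          |g z - g w| ≤ K * ‖z - w‖ ^ α) →
      ∀ r ∈ Set.Ioo (0 : ℝ) 1,
        ∀ z ∈ ball (0 : Euc n) r ∩ {z : Euc n | 0 ≤ z (Fin.last n)},
          ∀ w ∈ ball (0 : Euc n) r ∩ {z : Euc n | 0 ≤ z (Fin.last n)},
            |Gop a g z - Gop a g w| ≤ c * K * ‖z - w‖ ^ α := by
  refine ⟨2/(1+a) + (2 ^ |a + α| + (1 + a)/(1 + a + α) + 2 * 2 ^ α/(1 + a + α)),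
    fun g K hK hg r hr z hz w hw => ?_⟩
  have hz1 : z ∈ ball (0 : Euc n) 1 ∩ {z : Euc n | 0 ≤ z (Fin.last n)} :=
    ⟨ball_subset_ball hr.2.le hz.1, hz.2⟩
  have hw1 : w ∈ ball (0 : Euc n) 1 ∩ {z : Euc n | 0 ≤ z (Fin.last n)} :=
    ⟨ball_subset_ball hr.2.le hw.1, hw.2⟩
  rcases le_total (z (Fin.last n)) (w (Fin.last n)) with h | h
  · exact main_aux ha hα g K hK hg hz1 hw1 h
  · rw [abs_sub_comm, norm_sub_rev]
    exact main_aux ha hα g K hK hg hw1 hz1 h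
end

section
/- Let a ∈ ℝ, k ∈ ℕ ∪ {0}, α ∈ [0,1], and let f ∈ C^{k+2,α}(B₁) be even in y. Then Gf(x,y) := ∂_y f(x,y)/y (defined at y = 0 by the limit ∂²_{yy} f(x,0)) belongs to C^{k,α}(B₁), and satisfies Gf(x,y) = ∫₀¹ ∂²_{yy} f(x, s y) ds with k-th order partial derivatives that are α-Hölder with seminorm at most [∂_i^k ∂²_{yy} f]_{C^{0,α}}. -/
open MeasureTheory Metric Real
open scoped RealInnerProductSpace

/-- Partial derivative in the `y` (last) direction. -/
noncomputable def pdy {n : ℕ} (g : Euc n → ℝ) (z : Euc n) : ℝ :=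
  fderiv ℝ g z (EuclideanSpace.single (Fin.last n) 1)

/-- Second partial derivative in the `y` direction. -/
noncomputable def d2y {n : ℕ} (g : Euc n → ℝ) : Euc n → ℝ :=
  fun z => pdy (fun w => pdy g w) z

/-- Reflection `(x,y) ↦ (x,-y)`. -/
noncomputable def reflY {n : ℕ} (z : Euc n) : Euc n :=
  z - (2 * z (Fin.last n)) • EuclideanSpace.single (Fin.last n) (1 : ℝ)

noncomputable def eL (n : ℕ) : Euc n := EuclideanSpace.single (Fin.last n) (1 : ℝ)

lemma norm_eL (n : ℕ) : ‖eL n‖ = 1 := by simp [eL, EuclideanSpace.norm_single]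

lemma inner_eL {n : ℕ} (z : Euc n) : ⟪z, eL n⟫ = z (Fin.last n) := by
  simp [eL, EuclideanSpace.inner_single_right]

/-- norm of `z + c • e` squared. -/
lemma norm_add_smul_eL {n : ℕ} (z : Euc n) (c : ℝ) :
    ‖z + c • eL n‖ ^ 2 = ‖z‖ ^ 2 + 2 * c * z (Fin.last n) + c ^ 2 := by
  rw [norm_add_sq_real, real_inner_smul_right, inner_eL, norm_smul, norm_eL, mul_one,
    Real.norm_eq_abs, sq_abs]
  ring

noncomputable def Lmap (n : ℕ) (s : ℝ) : Euc n →L[ℝ] Euc n :=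
  ContinuousLinearMap.id ℝ (Euc n) +
    (s - 1) • (EuclideanSpace.proj (Fin.last n)).smulRight (eL n)

lemma Lmap_apply {n : ℕ} (s : ℝ) (z : Euc n) :
    Lmap n s z = z + ((s - 1) * z (Fin.last n)) • eL n := by
  simp [Lmap, ContinuousLinearMap.smulRight_apply, smul_smul]

lemma norm_Lmap_le {n : ℕ} {s : ℝ} (hs : s ∈ Set.Icc (0:ℝ) 1) (z : Euc n) :
    ‖Lmap n s z‖ ≤ ‖z‖ := by
  obtain ⟨h0, h1⟩ := hs
  have h := norm_add_smul_eL z ((s - 1) * z (Fin.last n))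
  rw [← Lmap_apply] at h
  have hz2 : z (Fin.last n) ^ 2 ≤ ‖z‖ ^ 2 := by
    have := norm_add_smul_eL z (- z (Fin.last n))
    have h0 : 0 ≤ ‖z + (- z (Fin.last n)) • eL n‖ ^ 2 := sq_nonneg _
    nlinarith
  have hs2 : (0:ℝ) ≤ (1 - s ^ 2) := by nlinarith
  have hsq : ‖Lmap n s z‖ ^ 2 ≤ ‖z‖ ^ 2 := by
    nlinarith [mul_nonneg hs2 (sq_nonneg (z (Fin.last n)))]
  nlinarith [norm_nonneg (Lmap n s z), norm_nonneg z]

lemma opNorm_Lmap_le {n : ℕ} {s : ℝ} (hs : s ∈ Set.Icc (0:ℝ) 1) : ‖Lmap n s‖ ≤ 1 :=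
  ContinuousLinearMap.opNorm_le_bound _ zero_le_one fun z => by
    simpa using norm_Lmap_le hs z

lemma Lmap_mem_ball {n : ℕ} {s : ℝ} (hs : s ∈ Set.Icc (0:ℝ) 1) {z : Euc n}
    (hz : z ∈ ball (0 : Euc n) 1) : Lmap n s z ∈ ball (0 : Euc n) 1 := by
  rw [mem_ball_zero_iff] at hz ⊢
  exact lt_of_le_of_lt (norm_Lmap_le hs z) hz

lemma Lmap_eq_setY {n : ℕ} (s : ℝ) (z : Euc n) :
    Lmap n s z = setY z (s * z (Fin.last n)) := by
  rw [Lmap_apply, setY]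
  have : (s - 1) * z (Fin.last n) = s * z (Fin.last n) - z (Fin.last n) := by ring
  rw [this]; rfl

lemma continuous_Lmap (n : ℕ) : Continuous fun s : ℝ => Lmap n s := by
  unfold Lmap
  exact continuous_const.add ((continuous_id.sub continuous_const).smul continuous_const)

variable {n : ℕ}

noncomputable def gW (f : Euc n → ℝ) (w : Euc n) : ℝ :=
  fderivWithin ℝ f (ball (0 : Euc n) 1) w (eL n)

lemma pdy_eq {f : Euc n → ℝ} {z : Euc n} (hz : z ∈ ball (0 : Euc n) 1) :
    pdy f z = gW f z := by
  rw [pdy, gW, fderivWithin_of_isOpen isOpen_ball hz]; rfl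

lemma contDiffOn_gW {f : Euc n → ℝ} {m : WithTop ℕ∞} (hf : ContDiffOn ℝ (m + 1) f (ball (0 : Euc n) 1)) :
    ContDiffOn ℝ m (gW f) (ball (0 : Euc n) 1) :=
  (hf.fderivWithin isOpen_ball.uniqueDiffOn le_rfl).clm_apply contDiffOn_const

lemma pdy_eventuallyEq {f : Euc n → ℝ} {z : Euc n} (hz : z ∈ ball (0 : Euc n) 1) :
    pdy f =ᶠ[nhds z] gW f :=
  Filter.eventuallyEq_of_mem (isOpen_ball.mem_nhds hz) fun _ hw => pdy_eq hw

lemma d2y_eq {f : Euc n → ℝ} {z : Euc n} (hz : z ∈ ball (0 : Euc n) 1) :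
    d2y f z = gW (gW f) z := by
  have h1 : fderiv ℝ (pdy f) z = fderiv ℝ (gW f) z := (pdy_eventuallyEq hz).fderiv_eq
  show fderiv ℝ (fun w => pdy f w) z (EuclideanSpace.single (Fin.last n) 1) = _
  rw [show (fun w => pdy f w) = pdy f from rfl, h1, gW, fderivWithin_of_isOpen isOpen_ball hz]
  rfl

lemma contDiffOn_d2y {f : Euc n → ℝ} {k : ℕ} (hf : ContDiffOn ℝ ((k : ℕ∞) + 2) f (ball (0 : Euc n) 1)) :
    ContDiffOn ℝ (k : ℕ∞) (d2y f) (ball (0 : Euc n) 1) := by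
  have h1 : ContDiffOn ℝ ((k : ℕ∞) + 1) (gW f) (ball (0 : Euc n) 1) := by
    apply contDiffOn_gW (m := ((k : ℕ∞) : WithTop ℕ∞) + 1)
    have h : ((k : ℕ∞) : WithTop ℕ∞) + 1 + 1 = ((k : ℕ∞) : WithTop ℕ∞) + 2 := by
      rw [add_assoc]; norm_num
    rw [h]; exact hf
  exact (contDiffOn_gW h1).congr fun z hz => d2y_eq hz

noncomputable def Rmap (n : ℕ) : Euc n →L[ℝ] Euc n :=
  ContinuousLinearMap.id ℝ (Euc n) - (2 : ℝ) • (EuclideanSpace.proj (Fin.last n)).smulRight (eL n)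

lemma Rmap_apply (z : Euc n) : Rmap n z = z - (2 * z (Fin.last n)) • eL n := by
  simp [Rmap, ContinuousLinearMap.smulRight_apply, smul_smul]

lemma Rmap_eq_reflY (z : Euc n) : Rmap n z = reflY z := by rw [Rmap_apply]; rfl

lemma eL_last : eL n (Fin.last n) = 1 := by simp [eL, EuclideanSpace.single_apply]

lemma Rmap_eL : Rmap n (eL n) = -(eL n) := by
  rw [Rmap_apply, eL_last, mul_one, two_smul]; abel

lemma pdy_zero_of_even {f : Euc n → ℝ} {k : ℕ}
    (hf : ContDiffOn ℝ ((k : ℕ∞) + 2) f (ball (0 : Euc n) 1))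
    (heven : ∀ z ∈ ball (0 : Euc n) 1, f (reflY z) = f z)
    {z : Euc n} (hz : z ∈ ball (0 : Euc n) 1) (hz0 : z (Fin.last n) = 0) : pdy f z = 0 := by
  have hdiff : DifferentiableAt ℝ f z :=
    (hf.contDiffAt (isOpen_ball.mem_nhds hz)).differentiableAt
      (by simp)
  have hR : Rmap n z = z := by rw [Rmap_apply, hz0]; simp
  have heq : (f ∘ Rmap n) =ᶠ[nhds z] f :=
    Filter.eventuallyEq_of_mem (isOpen_ball.mem_nhds hz) fun w hw => by
      simp only [Function.comp_apply, Rmap_eq_reflY]; exact heven w hw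
  have hdR : fderiv ℝ (f ∘ Rmap n) z = (fderiv ℝ f z).comp (Rmap n) := by
    rw [fderiv_comp z (by rw [hR]; exact hdiff) (Rmap n).differentiableAt,
      (Rmap n).fderiv, hR]
  have h2 : fderiv ℝ (f ∘ Rmap n) z = fderiv ℝ f z := heq.fderiv_eq
  rw [hdR] at h2
  have h3 := congrArg (fun L : Euc n →L[ℝ] ℝ => L (eL n)) h2
  simp only [ContinuousLinearMap.comp_apply, Rmap_eL, map_neg] at h3
  have : pdy f z = fderiv ℝ f z (eL n) := rfl
  rw [this]
  linarith

lemma setY_mem_ball {z : Euc n} {t : ℝ} (hz : z ∈ ball (0 : Euc n) 1)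
    (ht : |t| ≤ |z (Fin.last n)|) : setY z t ∈ ball (0 : Euc n) 1 := by
  rw [mem_ball_zero_iff] at hz ⊢
  have h := norm_add_smul_eL z (t - z (Fin.last n))
  have hsetY : setY z t = z + (t - z (Fin.last n)) • eL n := rfl
  rw [← hsetY] at h
  have ht2 : t ^ 2 ≤ z (Fin.last n) ^ 2 := by
    have := mul_self_le_mul_self (abs_nonneg t) ht
    simpa [← sq_abs t, ← sq_abs (z (Fin.last n)), sq] using this
  have hsq : ‖setY z t‖ ^ 2 ≤ ‖z‖ ^ 2 := by nlinarith
  nlinarith [norm_nonneg (setY z t), norm_nonneg z]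

lemma setY_last (z : Euc n) (t : ℝ) : setY z t (Fin.last n) = t := by
  have : setY z t (Fin.last n) =
      z (Fin.last n) + (t - z (Fin.last n)) * (EuclideanSpace.single (Fin.last n) (1:ℝ)) (Fin.last n) := by
    rfl
  rw [this, EuclideanSpace.single_apply]
  simp

lemma setY_self (z : Euc n) : setY z (z (Fin.last n)) = z := by
  simp [setY]

lemma abs_le_of_mem_uIcc {t y : ℝ} (ht : t ∈ Set.uIcc (0 : ℝ) y) : |t| ≤ |y| := by
  rw [Set.uIcc_eq_union, Set.mem_union, Set.mem_Icc, Set.mem_Icc] at ht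
  rcases ht with ⟨h1, h2⟩ | ⟨h1, h2⟩
  · rw [abs_of_nonneg h1]; exact h2.trans (le_abs_self y)
  · rw [abs_of_nonpos h2]; exact (neg_le_neg h1).trans (neg_le_abs y)

lemma continuous_setY (z : Euc n) : Continuous fun t : ℝ => setY z t := by
  unfold setY
  exact continuous_const.add ((continuous_id.sub continuous_const).smul continuous_const)

lemma keyFTC {f : Euc n → ℝ} {k : ℕ}
    (hf : ContDiffOn ℝ ((k : ℕ∞) + 2) f (ball (0 : Euc n) 1))
    (heven : ∀ z ∈ ball (0 : Euc n) 1, f (reflY z) = f z)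
    {z : Euc n} (hz : z ∈ ball (0 : Euc n) 1) :
    ∫ t in (0 : ℝ)..(z (Fin.last n)), d2y f (setY z t) = pdy f z := by
  have h1 : ContDiffOn ℝ ((k : ℕ∞) + 1) (gW f) (ball (0 : Euc n) 1) := by
    apply contDiffOn_gW (m := ((k : ℕ∞) : WithTop ℕ∞) + 1)
    have h : ((k : ℕ∞) : WithTop ℕ∞) + 1 + 1 = ((k : ℕ∞) : WithTop ℕ∞) + 2 := by
      rw [add_assoc]; norm_num
    rw [h]; exact hf
  have hg2 : ContDiffOn ℝ (k : ℕ∞) (d2y f) (ball (0 : Euc n) 1) := contDiffOn_d2y hf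
  have hmem : ∀ t ∈ Set.uIcc (0 : ℝ) (z (Fin.last n)), setY z t ∈ ball (0 : Euc n) 1 :=
    fun t ht => setY_mem_ball hz (abs_le_of_mem_uIcc ht)
  have hasD : ∀ t ∈ Set.uIcc (0 : ℝ) (z (Fin.last n)),
      HasDerivAt (fun t => pdy f (setY z t)) (d2y f (setY z t)) t := by
    intro t ht
    have hw : setY z t ∈ ball (0 : Euc n) 1 := hmem t ht
    have hdiff : DifferentiableAt ℝ (gW f) (setY z t) :=
      (h1.contDiffAt (isOpen_ball.mem_nhds hw)).differentiableAt
        (by simp)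
    have hF : HasFDerivAt (pdy f) (fderiv ℝ (gW f) (setY z t)) (setY z t) :=
      hdiff.hasFDerivAt.congr_of_eventuallyEq (pdy_eventuallyEq hw)
    have hline : HasDerivAt (fun t => setY z t) (eL n) t := by
      have hfun : (fun t => setY z t) =
          fun t => (z - z (Fin.last n) • eL n) + t • eL n := by
        funext u
        show setY z u = _
        rw [setY, sub_smul]
        show z + (u • eL n - z (Fin.last n) • eL n) = _
        abel
      rw [hfun]
      have := (hasDerivAt_id t).smul_const (eL n)
      simpa using this.const_add (z - z (Fin.last n) • eL n)
    have hcomp := hF.comp_hasDerivAt t hline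
    have hid : fderiv ℝ (gW f) (setY z t) (eL n) = d2y f (setY z t) := by
      rw [← fderivWithin_of_isOpen isOpen_ball hw, d2y_eq hw]; rfl
    rw [hid] at hcomp
    exact hcomp
  have hint : IntervalIntegrable (fun t => d2y f (setY z t)) volume 0 (z (Fin.last n)) := by
    apply ContinuousOn.intervalIntegrable
    exact hg2.continuousOn.comp (continuous_setY z).continuousOn hmem
  have hFTC := intervalIntegral.integral_eq_sub_of_hasDerivAt hasD hint
  rw [hFTC, setY_self]
  have h0 : setY z 0 ∈ ball (0 : Euc n) 1 :=
    setY_mem_ball hz (by simp [abs_nonneg])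
  rw [pdy_zero_of_even hf heven h0 (setY_last z 0)]
  ring

lemma key1 {f : Euc n → ℝ} {k : ℕ}
    (hf : ContDiffOn ℝ ((k : ℕ∞) + 2) f (ball (0 : Euc n) 1))
    (heven : ∀ z ∈ ball (0 : Euc n) 1, f (reflY z) = f z)
    {G : Euc n → ℝ}
    (hG : ∀ z : Euc n, G z =
      if z (Fin.last n) = 0 then d2y f z else pdy f z / z (Fin.last n))
    {z : Euc n} (hz : z ∈ ball (0 : Euc n) 1) :
    G z = ∫ s in Set.Ioo (0 : ℝ) 1, d2y f (setY z (s * z (Fin.last n))) := by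
  have hioo : ∀ F : ℝ → ℝ, ∫ s in Set.Ioo (0 : ℝ) 1, F s = ∫ s in (0 : ℝ)..1, F s := by
    intro F
    rw [intervalIntegral.integral_of_le zero_le_one, integral_Ioc_eq_integral_Ioo]
  rw [hG z]
  by_cases hy : z (Fin.last n) = 0
  · rw [if_pos hy]
    have hconst : ∀ s : ℝ, setY z (s * z (Fin.last n)) = z := by
      intro s
      rw [hy, mul_zero]
      have : setY z 0 = z + ((0 : ℝ) - z (Fin.last n)) • eL n := rfl
      rw [this, hy]
      simp
    simp only [hconst]
    rw [setIntegral_const, Real.volume_real_Ioo]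
    norm_num
  · rw [if_neg hy]
    rw [hioo]
    have hFTC := keyFTC hf heven hz
    have hsub := intervalIntegral.integral_comp_mul_right
      (a := (0:ℝ)) (b := (1:ℝ)) (fun t => d2y f (setY z t)) hy
    rw [zero_mul, one_mul] at hsub
    rw [hsub, hFTC, smul_eq_mul]
    field_simp

noncomputable def Psi (g : Euc n → ℝ) (m : ℕ) (s : ℝ) (z : Euc n) :
    ContinuousMultilinearMap ℝ (fun _ : Fin m => Euc n) ℝ :=
  ContinuousMultilinearMap.compContinuousLinearMapL (fun _ : Fin m => Lmap n s)
    (iteratedFDerivWithin ℝ m g (ball (0 : Euc n) 1) (Lmap n s z))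

noncomputable def pser (g : Euc n → ℝ) (z : Euc n) : FormalMultilinearSeries ℝ (Euc n) ℝ :=
  fun m => ∫ s in Set.Ioo (0 : ℝ) 1, Psi g m s z

lemma continuous_LmapApp (z : Euc n) : Continuous fun s : ℝ => Lmap n s z := by
  simp only [Lmap_apply]
  fun_prop

lemma continuous_compL (m : ℕ) :
    Continuous fun s : ℝ =>
      ContinuousMultilinearMap.compContinuousLinearMapL (𝕜 := ℝ) (F := ℝ)
        (fun _ : Fin m => Lmap n s) := by
  have hc := (ContinuousMultilinearMap.compContinuousLinearMapContinuousMultilinear ℝ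
    (fun _ : Fin m => Euc n) (fun _ : Fin m => Euc n) ℝ).cont
  exact hc.comp (continuous_pi fun _ => continuous_Lmap n)

lemma continuousOn_Psi {g : Euc n → ℝ} {m k : ℕ} (hm : m ≤ k)
    (hg : ContDiffOn ℝ (k : ℕ∞) g (ball (0 : Euc n) 1))
    {z : Euc n} (hz : z ∈ ball (0 : Euc n) 1) :
    ContinuousOn (fun s => Psi g m s z) (Set.Icc (0 : ℝ) 1) := by
  have hD : ContinuousOn (iteratedFDerivWithin ℝ m g (ball (0 : Euc n) 1))
      (ball (0 : Euc n) 1) :=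
    hg.continuousOn_iteratedFDerivWithin (by exact_mod_cast hm) isOpen_ball.uniqueDiffOn
  have h1 : ContinuousOn (fun s => iteratedFDerivWithin ℝ m g (ball (0 : Euc n) 1)
      (Lmap n s z)) (Set.Icc (0 : ℝ) 1) :=
    hD.comp (continuous_LmapApp z).continuousOn fun s hs => Lmap_mem_ball hs hz
  unfold Psi
  exact ((continuous_compL m).continuousOn).clm_apply h1

lemma norm_Psi_le {g : Euc n → ℝ} {m : ℕ} {s : ℝ} (hs : s ∈ Set.Icc (0 : ℝ) 1) (z : Euc n) :
    ‖Psi g m s z‖ ≤ ‖iteratedFDerivWithin ℝ m g (ball (0 : Euc n) 1) (Lmap n s z)‖ := by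
  have hp : (∏ _i : Fin m, ‖Lmap n s‖) ≤ 1 := by
    apply Finset.prod_le_one (fun _ _ => norm_nonneg _) (fun _ _ => opNorm_Lmap_le hs)
  calc ‖Psi g m s z‖ ≤ ‖ContinuousMultilinearMap.compContinuousLinearMapL (F := ℝ)
        (fun _ : Fin m => Lmap n s)‖ *
        ‖iteratedFDerivWithin ℝ m g (ball (0 : Euc n) 1) (Lmap n s z)‖ :=
      ContinuousLinearMap.le_opNorm _ _
    _ ≤ 1 * ‖iteratedFDerivWithin ℝ m g (ball (0 : Euc n) 1) (Lmap n s z)‖ := by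
      apply mul_le_mul_of_nonneg_right _ (norm_nonneg _)
      exact le_trans (ContinuousMultilinearMap.norm_compContinuousLinearMapL_le ℝ _) hp
    _ = _ := one_mul _

noncomputable def PsiD (g : Euc n → ℝ) (m : ℕ) (s : ℝ) (x : Euc n) :
    Euc n →L[ℝ] ContinuousMultilinearMap ℝ (fun _ : Fin m => Euc n) ℝ :=
  (ContinuousMultilinearMap.compContinuousLinearMapL (fun _ : Fin m => Lmap n s)).comp
    (((iteratedFDerivWithin ℝ (m + 1) g (ball (0 : Euc n) 1) (Lmap n s x)).curryLeft).comp
      (Lmap n s))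

lemma hasFDerivAt_Psi {g : Euc n → ℝ} {m k : ℕ} (hm : m < k)
    (hg : ContDiffOn ℝ (k : ℕ∞) g (ball (0 : Euc n) 1))
    {s : ℝ} (hs : s ∈ Set.Icc (0 : ℝ) 1) {x : Euc n} (hx : x ∈ ball (0 : Euc n) 1) :
    HasFDerivAt (fun w => Psi g m s w) (PsiD g m s x) x := by
  have hu : Lmap n s x ∈ ball (0 : Euc n) 1 := Lmap_mem_ball hs hx
  have ht := (hg.ftaylorSeriesWithin isOpen_ball.uniqueDiffOn).fderivWithin m
    (by exact_mod_cast hm) (Lmap n s x) hu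
  have ht' : HasFDerivAt (fun v => iteratedFDerivWithin ℝ m g (ball (0 : Euc n) 1) v)
      ((iteratedFDerivWithin ℝ (m + 1) g (ball (0 : Euc n) 1) (Lmap n s x)).curryLeft)
      (Lmap n s x) :=
    ht.hasFDerivAt (isOpen_ball.mem_nhds hu)
  have hcomp := ht'.comp x (Lmap n s).hasFDerivAt
  exact (ContinuousMultilinearMap.compContinuousLinearMapL
    (fun _ : Fin m => Lmap n s)).hasFDerivAt.comp x hcomp

lemma norm_PsiD_le {g : Euc n → ℝ} {m : ℕ} {s : ℝ} (hs : s ∈ Set.Icc (0 : ℝ) 1) (x : Euc n) :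
    ‖PsiD g m s x‖ ≤ ‖iteratedFDerivWithin ℝ (m + 1) g (ball (0 : Euc n) 1) (Lmap n s x)‖ := by
  have hp : (∏ _i : Fin m, ‖Lmap n s‖) ≤ 1 := by
    apply Finset.prod_le_one (fun _ _ => norm_nonneg _) (fun _ _ => opNorm_Lmap_le hs)
  have hΦ : ‖ContinuousMultilinearMap.compContinuousLinearMapL (F := ℝ)
      (fun _ : Fin m => Lmap n s)‖ ≤ 1 :=
    le_trans (ContinuousMultilinearMap.norm_compContinuousLinearMapL_le ℝ _) hp
  have hc : ‖(iteratedFDerivWithin ℝ (m + 1) g (ball (0 : Euc n) 1)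
      (Lmap n s x)).curryLeft‖ =
      ‖iteratedFDerivWithin ℝ (m + 1) g (ball (0 : Euc n) 1) (Lmap n s x)‖ :=
    ContinuousMultilinearMap.curryLeft_norm _
  set T := ‖iteratedFDerivWithin ℝ (m + 1) g (ball (0 : Euc n) 1) (Lmap n s x)‖ with hT
  calc ‖PsiD g m s x‖ ≤ ‖ContinuousMultilinearMap.compContinuousLinearMapL (F := ℝ)
        (fun _ : Fin m => Lmap n s)‖ *
        (‖(iteratedFDerivWithin ℝ (m + 1) g (ball (0 : Euc n) 1) (Lmap n s x)).curryLeft‖ *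
          ‖Lmap n s‖) :=
      le_trans (ContinuousLinearMap.opNorm_comp_le _ _)
        (by
          apply mul_le_mul_of_nonneg_left (ContinuousLinearMap.opNorm_comp_le _ _)
            (norm_nonneg _))
    _ ≤ 1 * (T * 1) := by
      apply mul_le_mul hΦ _ (by positivity) zero_le_one
      rw [hc]
      exact mul_le_mul_of_nonneg_left (opNorm_Lmap_le hs) (by positivity)
    _ = T := by ring

lemma continuousOn_PsiD {g : Euc n → ℝ} {m k : ℕ} (hm : m + 1 ≤ k)
    (hg : ContDiffOn ℝ (k : ℕ∞) g (ball (0 : Euc n) 1))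
    {x : Euc n} (hx : x ∈ ball (0 : Euc n) 1) :
    ContinuousOn (fun s => PsiD g m s x) (Set.Icc (0 : ℝ) 1) := by
  have hD : ContinuousOn (iteratedFDerivWithin ℝ (m + 1) g (ball (0 : Euc n) 1))
      (ball (0 : Euc n) 1) :=
    hg.continuousOn_iteratedFDerivWithin (by exact_mod_cast hm) isOpen_ball.uniqueDiffOn
  have h1 : ContinuousOn (fun s => iteratedFDerivWithin ℝ (m + 1) g (ball (0 : Euc n) 1)
      (Lmap n s x)) (Set.Icc (0 : ℝ) 1) :=
    hD.comp (continuous_LmapApp x).continuousOn fun s hs => Lmap_mem_ball hs hx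
  have h2 : ContinuousOn (fun s => (iteratedFDerivWithin ℝ (m + 1) g (ball (0 : Euc n) 1)
      (Lmap n s x)).curryLeft) (Set.Icc (0 : ℝ) 1) :=
    ((continuousMultilinearCurryLeftEquiv ℝ (fun _ : Fin (m + 1) => Euc n)
      ℝ).continuous).comp_continuousOn h1
  have h3 := h2.clm_comp (continuous_Lmap n).continuousOn
  unfold PsiD
  exact ((continuous_compL m).continuousOn).clm_comp h3

instance ioo_finite : IsFiniteMeasure (volume.restrict (Set.Ioo (0 : ℝ) 1)) := by
  constructor
  rw [Measure.restrict_apply_univ, Real.volume_Ioo]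
  norm_num

noncomputable instance psiD_enorm (m : ℕ) :
    ContinuousENorm (Euc n →L[ℝ] ContinuousMultilinearMap ℝ (fun _ : Fin m => Euc n) ℝ) :=
  letI : NormedAddCommGroup
      (Euc n →L[ℝ] ContinuousMultilinearMap ℝ (fun _ : Fin m => Euc n) ℝ) := inferInstance
  inferInstance

lemma loc_ball {z₀ : Euc n} (hz₀ : z₀ ∈ ball (0 : Euc n) 1) :
    0 < (1 - ‖z₀‖) / 2 ∧
      (∀ x ∈ ball z₀ ((1 - ‖z₀‖) / 2), ‖x‖ ≤ (1 + ‖z₀‖) / 2) ∧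
      closedBall (0 : Euc n) ((1 + ‖z₀‖) / 2) ⊆ ball (0 : Euc n) 1 := by
  rw [mem_ball_zero_iff] at hz₀
  refine ⟨by linarith, fun x hx => ?_, fun y hy => ?_⟩
  · rw [mem_ball] at hx
    have := norm_sub_norm_le x z₀
    rw [← dist_eq_norm] at this
    linarith
  · rw [mem_closedBall_zero_iff] at hy
    rw [mem_ball_zero_iff]
    linarith

lemma integrableOn_Psi {g : Euc n → ℝ} {m k : ℕ} (hm : m ≤ k)
    (hg : ContDiffOn ℝ (k : ℕ∞) g (ball (0 : Euc n) 1))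
    {z : Euc n} (hz : z ∈ ball (0 : Euc n) 1) :
    IntegrableOn (fun s => Psi g m s z) (Set.Ioo (0 : ℝ) 1) volume :=
  ((continuousOn_Psi hm hg hz).integrableOn_Icc).mono_set Set.Ioo_subset_Icc_self

lemma integrableOn_PsiD {g : Euc n → ℝ} {m k : ℕ} (hm : m + 1 ≤ k)
    (hg : ContDiffOn ℝ (k : ℕ∞) g (ball (0 : Euc n) 1))
    {z : Euc n} (hz : z ∈ ball (0 : Euc n) 1) :
    IntegrableOn (fun s => PsiD g m s z) (Set.Ioo (0 : ℝ) 1) volume := by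
  letI : NormedAddCommGroup
      (Euc n →L[ℝ] ContinuousMultilinearMap ℝ (fun _ : Fin m => Euc n) ℝ) := inferInstance
  exact ((continuousOn_PsiD hm hg hz).integrableOn_Icc).mono_set Set.Ioo_subset_Icc_self

set_option maxHeartbeats 1600000 in
set_option synthInstance.maxHeartbeats 400000 in
lemma pser_hasFDerivAt {g : Euc n → ℝ} {m k : ℕ} (hm : m < k)
    (hg : ContDiffOn ℝ (k : ℕ∞) g (ball (0 : Euc n) 1))
    {z₀ : Euc n} (hz₀ : z₀ ∈ ball (0 : Euc n) 1) :
    HasFDerivAt (fun z => pser g z m)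
      (∫ s in Set.Ioo (0 : ℝ) 1, PsiD g m s z₀) z₀ := by
  obtain ⟨hr, hballs, hsub⟩ := loc_ball hz₀
  set r := (1 - ‖z₀‖) / 2
  set ρ := (1 + ‖z₀‖) / 2
  have hball_sub : ball z₀ r ⊆ ball (0 : Euc n) 1 := fun x hx =>
    hsub (mem_closedBall_zero_iff.mpr (hballs x hx))
  have hD : ContinuousOn (iteratedFDerivWithin ℝ (m + 1) g (ball (0 : Euc n) 1))
      (ball (0 : Euc n) 1) :=
    hg.continuousOn_iteratedFDerivWithin (by exact_mod_cast hm) isOpen_ball.uniqueDiffOn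
  obtain ⟨C, hC⟩ := (isCompact_closedBall (0 : Euc n) ρ).exists_bound_of_continuousOn
    (hD.mono hsub)
  have hLin : ∀ s ∈ Set.Icc (0 : ℝ) 1, ∀ x ∈ ball z₀ r,
      Lmap n s x ∈ closedBall (0 : Euc n) ρ := fun s hs x hx =>
    mem_closedBall_zero_iff.mpr ((norm_Lmap_le hs x).trans (hballs x hx))
  haveI hpm : TopologicalSpace.PseudoMetrizableSpace
      (Euc n →L[ℝ] ContinuousMultilinearMap ℝ (fun _ : Fin m => Euc n) ℝ) :=
    letI : PseudoMetricSpace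
        (Euc n →L[ℝ] ContinuousMultilinearMap ℝ (fun _ : Fin m => Euc n) ℝ) :=
      inferInstance
    inferInstance
  apply hasFDerivAt_integral_of_dominated_of_fderiv_le
    (bound := fun _ => C) (F' := fun x s => PsiD g m s x) (ball_mem_nhds z₀ hr)
  · filter_upwards [isOpen_ball.mem_nhds (mem_ball_self hr)] with x hx
    exact ((continuousOn_Psi hm.le hg (hball_sub hx)).mono
      Set.Ioo_subset_Icc_self).aestronglyMeasurable measurableSet_Ioo
  · exact integrableOn_Psi hm.le hg hz₀
  · exact ((continuousOn_PsiD hm hg hz₀).mono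
      Set.Ioo_subset_Icc_self).aestronglyMeasurable measurableSet_Ioo
  · apply ae_restrict_of_forall_mem measurableSet_Ioo
    intro s hs x hx
    exact (norm_PsiD_le (Set.Ioo_subset_Icc_self hs) x).trans
      (hC _ (hLin s (Set.Ioo_subset_Icc_self hs) x hx))
  · exact integrable_const C
  · apply ae_restrict_of_forall_mem measurableSet_Ioo
    intro s hs x hx
    exact hasFDerivAt_Psi hm hg (Set.Ioo_subset_Icc_self hs) (hball_sub hx)

set_option maxHeartbeats 1600000 in
set_option synthInstance.maxHeartbeats 400000 in
lemma integral_PsiD_eq {g : Euc n → ℝ} {m k : ℕ} (hm : m < k)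
    (hg : ContDiffOn ℝ (k : ℕ∞) g (ball (0 : Euc n) 1))
    {z₀ : Euc n} (hz₀ : z₀ ∈ ball (0 : Euc n) 1) :
    ∫ s in Set.Ioo (0 : ℝ) 1, PsiD g m s z₀ = (pser g z₀ (m + 1)).curryLeft := by
  have hint1 : IntegrableOn (fun s => PsiD g m s z₀) (Set.Ioo (0 : ℝ) 1) volume :=
    integrableOn_PsiD hm hg hz₀
  have hint2 : IntegrableOn (fun s => Psi g (m + 1) s z₀) (Set.Ioo (0 : ℝ) 1) volume :=
    integrableOn_Psi hm hg hz₀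
  ext v m'
  rw [ContinuousLinearMap.integral_apply hint1 v,
    ContinuousMultilinearMap.integral_apply (hint1.apply_continuousLinearMap v) m']
  have hR : (pser g z₀ (m + 1)).curryLeft v m' = pser g z₀ (m + 1) (Fin.cons v m') :=
    ContinuousMultilinearMap.curryLeft_apply _ _ _
  rw [hR, pser, ContinuousMultilinearMap.integral_apply hint2 (Fin.cons v m')]
  apply integral_congr_ae
  apply Filter.Eventually.of_forall
  intro s
  show PsiD g m s z₀ v m' = Psi g (m + 1) s z₀ (Fin.cons v m')
  rw [PsiD, Psi]
  simp only [ContinuousLinearMap.comp_apply,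
    ContinuousMultilinearMap.compContinuousLinearMapL_apply,
    ContinuousMultilinearMap.compContinuousLinearMap_apply,
    ContinuousMultilinearMap.curryLeft_apply]
  exact congrArg (iteratedFDerivWithin ℝ (m + 1) g (ball (0 : Euc n) 1) (Lmap n s z₀))
    (Fin.comp_cons (Lmap n s) v m').symm

set_option maxHeartbeats 1600000 in
set_option synthInstance.maxHeartbeats 400000 in
lemma continuousOn_pser {g : Euc n → ℝ} {m k : ℕ} (hm : m ≤ k)
    (hg : ContDiffOn ℝ (k : ℕ∞) g (ball (0 : Euc n) 1)) :
    ContinuousOn (fun z => pser g z m) (ball (0 : Euc n) 1) := by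
  intro z₀ hz₀
  apply ContinuousAt.continuousWithinAt
  obtain ⟨hr, hballs, hsub⟩ := loc_ball hz₀
  set r := (1 - ‖z₀‖) / 2
  set ρ := (1 + ‖z₀‖) / 2
  have hball_sub : ball z₀ r ⊆ ball (0 : Euc n) 1 := fun x hx =>
    hsub (mem_closedBall_zero_iff.mpr (hballs x hx))
  have hD : ContinuousOn (iteratedFDerivWithin ℝ m g (ball (0 : Euc n) 1))
      (ball (0 : Euc n) 1) :=
    hg.continuousOn_iteratedFDerivWithin (by exact_mod_cast hm) isOpen_ball.uniqueDiffOn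
  obtain ⟨C, hC⟩ := (isCompact_closedBall (0 : Euc n) ρ).exists_bound_of_continuousOn
    (hD.mono hsub)
  apply continuousAt_of_dominated (bound := fun _ => C)
  · filter_upwards [isOpen_ball.mem_nhds (mem_ball_self hr)] with x hx
    exact ((continuousOn_Psi hm hg (hball_sub hx)).mono
      Set.Ioo_subset_Icc_self).aestronglyMeasurable measurableSet_Ioo
  · filter_upwards [isOpen_ball.mem_nhds (mem_ball_self hr)] with x hx
    apply ae_restrict_of_forall_mem measurableSet_Ioo
    intro s hs
    refine (norm_Psi_le (Set.Ioo_subset_Icc_self hs) x).trans (hC _ ?_)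
    exact mem_closedBall_zero_iff.mpr
      ((norm_Lmap_le (Set.Ioo_subset_Icc_self hs) x).trans (hballs x hx))
  · exact integrable_const C
  · apply ae_restrict_of_forall_mem measurableSet_Ioo
    intro s hs
    have hu : Lmap n s z₀ ∈ ball (0 : Euc n) 1 :=
      Lmap_mem_ball (Set.Ioo_subset_Icc_self hs) hz₀
    have h1 : ContinuousAt (iteratedFDerivWithin ℝ m g (ball (0 : Euc n) 1)) (Lmap n s z₀) :=
      hD.continuousAt (isOpen_ball.mem_nhds hu)
    have h2 : ContinuousAt (fun x : Euc n => Lmap n s x) z₀ :=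
      (Lmap n s).continuous.continuousAt
    exact ((ContinuousMultilinearMap.compContinuousLinearMapL
      (fun _ : Fin m => Lmap n s)).continuous.continuousAt).comp (h1.comp h2)

set_option maxHeartbeats 1600000 in
set_option synthInstance.maxHeartbeats 400000 in
lemma pser_zero {g : Euc n → ℝ} {k : ℕ}
    (hg : ContDiffOn ℝ (k : ℕ∞) g (ball (0 : Euc n) 1))
    {z : Euc n} (hz : z ∈ ball (0 : Euc n) 1) :
    pser g z 0 = (continuousMultilinearCurryFin0 ℝ (Euc n) ℝ).symm
      (∫ s in Set.Ioo (0 : ℝ) 1, g (Lmap n s z)) := by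
  have hpt : ∀ s : ℝ, Psi g 0 s z =
      (continuousMultilinearCurryFin0 ℝ (Euc n) ℝ).symm (g (Lmap n s z)) := by
    intro s
    ext m'
    simp [Psi]
  show (∫ s in Set.Ioo (0 : ℝ) 1, Psi g 0 s z) = _
  rw [funext hpt]
  have h := ((continuousMultilinearCurryFin0 ℝ (Euc n) ℝ).symm.toLinearIsometry.integral_comp_comm
    (μ := volume.restrict (Set.Ioo (0 : ℝ) 1)) (fun s => g (Lmap n s z))).symm
  simpa using h.symm

set_option maxHeartbeats 1600000 in
set_option synthInstance.maxHeartbeats 400000 in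
lemma hasFTaylor_pser {g : Euc n → ℝ} {k : ℕ}
    (hg : ContDiffOn ℝ (k : ℕ∞) g (ball (0 : Euc n) 1)) :
    HasFTaylorSeriesUpToOn (k : ℕ∞)
      (fun z => ∫ s in Set.Ioo (0 : ℝ) 1, g (Lmap n s z)) (pser g) (ball (0 : Euc n) 1) := by
  constructor
  · intro x hx
    rw [pser_zero hg hx]
    simp [ContinuousMultilinearMap.curry0_apply, continuousMultilinearCurryFin0_symm_apply]
  · intro m hm x hx
    have hmk : m < k := by exact_mod_cast hm
    have h := pser_hasFDerivAt hmk hg hx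
    rw [integral_PsiD_eq hmk hg hx] at h
    exact h.hasFDerivWithinAt
  · intro m hm
    have hmk : m ≤ k := by exact_mod_cast hm
    exact continuousOn_pser hmk hg

set_option maxHeartbeats 1600000 in
set_option synthInstance.maxHeartbeats 400000 in
lemma holder_pser {g : Euc n → ℝ} {k : ℕ} {α K : ℝ} (hα : 0 ≤ α)
    (hg : ContDiffOn ℝ (k : ℕ∞) g (ball (0 : Euc n) 1)) (hK0 : 0 ≤ K)
    (hK : ∀ z ∈ ball (0 : Euc n) 1, ∀ w ∈ ball (0 : Euc n) 1,
      ‖iteratedFDerivWithin ℝ k g (ball (0 : Euc n) 1) z -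
        iteratedFDerivWithin ℝ k g (ball (0 : Euc n) 1) w‖ ≤ K * ‖z - w‖ ^ α)
    {z w : Euc n} (hz : z ∈ ball (0 : Euc n) 1) (hw : w ∈ ball (0 : Euc n) 1) :
    ‖pser g z k - pser g w k‖ ≤ K * ‖z - w‖ ^ α := by
  have hintz := integrableOn_Psi le_rfl hg hz
  have hintw := integrableOn_Psi le_rfl hg hw
  have hps : pser g z k - pser g w k =
      ∫ s in Set.Ioo (0 : ℝ) 1, (Psi g k s z - Psi g k s w) := by
    rw [integral_sub hintz hintw]; rfl
  rw [hps]
  have hle : ∀ s ∈ Set.Ioo (0 : ℝ) 1, ‖Psi g k s z - Psi g k s w‖ ≤ K * ‖z - w‖ ^ α := by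
    intro s hs
    have hsI := Set.Ioo_subset_Icc_self hs
    have h1 : Psi g k s z - Psi g k s w =
        (ContinuousMultilinearMap.compContinuousLinearMapL (fun _ : Fin k => Lmap n s))
          (iteratedFDerivWithin ℝ k g (ball (0 : Euc n) 1) (Lmap n s z) -
            iteratedFDerivWithin ℝ k g (ball (0 : Euc n) 1) (Lmap n s w)) := by
      rw [map_sub]; rfl
    rw [h1]
    have hp : (∏ _i : Fin k, ‖Lmap n s‖) ≤ 1 :=
      Finset.prod_le_one (fun _ _ => norm_nonneg _) (fun _ _ => opNorm_Lmap_le hsI)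
    have hΦ : ‖ContinuousMultilinearMap.compContinuousLinearMapL (F := ℝ)
        (fun _ : Fin k => Lmap n s)‖ ≤ 1 :=
      le_trans (ContinuousMultilinearMap.norm_compContinuousLinearMapL_le ℝ _) hp
    have hKd := hK _ (Lmap_mem_ball hsI hz) _ (Lmap_mem_ball hsI hw)
    have hLd : ‖Lmap n s z - Lmap n s w‖ ≤ ‖z - w‖ := by
      rw [← map_sub]; exact norm_Lmap_le hsI _
    have hrp : ‖Lmap n s z - Lmap n s w‖ ^ α ≤ ‖z - w‖ ^ α :=
      Real.rpow_le_rpow (norm_nonneg _) hLd hα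
    calc ‖(ContinuousMultilinearMap.compContinuousLinearMapL (F := ℝ)
          (fun _ : Fin k => Lmap n s))
          (iteratedFDerivWithin ℝ k g (ball (0 : Euc n) 1) (Lmap n s z) -
            iteratedFDerivWithin ℝ k g (ball (0 : Euc n) 1) (Lmap n s w))‖ ≤
        ‖ContinuousMultilinearMap.compContinuousLinearMapL (F := ℝ)
          (fun _ : Fin k => Lmap n s)‖ *
          ‖iteratedFDerivWithin ℝ k g (ball (0 : Euc n) 1) (Lmap n s z) -
            iteratedFDerivWithin ℝ k g (ball (0 : Euc n) 1) (Lmap n s w)‖ :=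
        ContinuousLinearMap.le_opNorm _ _
      _ ≤ 1 * (K * ‖Lmap n s z - Lmap n s w‖ ^ α) := by
        apply mul_le_mul hΦ hKd (norm_nonneg _) zero_le_one
      _ ≤ K * ‖z - w‖ ^ α := by
        rw [one_mul]
        exact mul_le_mul_of_nonneg_left hrp hK0
  calc ‖∫ s in Set.Ioo (0 : ℝ) 1, (Psi g k s z - Psi g k s w)‖ ≤
      ∫ _s in Set.Ioo (0 : ℝ) 1, (K * ‖z - w‖ ^ α) :=
      norm_integral_le_of_norm_le (integrable_const _)
        (ae_restrict_of_forall_mem measurableSet_Ioo hle)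
    _ = K * ‖z - w‖ ^ α := by
      rw [setIntegral_const, Real.volume_real_Ioo]
      norm_num


set_option maxHeartbeats 1600000 in
set_option synthInstance.maxHeartbeats 400000 in
/-- for `f ∈ C^{k+2,α}(B₁)` even in `y`, the quotient
`Gf(x,y) = ∂_y f(x,y)/y` (defined at `y = 0` by `∂²_{yy} f(x,0)`) belongs to
`C^{k,α}(B₁)`, satisfies `Gf(x,y) = ∫₀¹ ∂²_{yy} f(x,sy) ds`, and its `k`-th order
derivatives are `α`-Hölder with seminorm at most that of the `k`-th derivatives of
`∂²_{yy} f`. -/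
theorem stmt15 (n k : ℕ) (a : ℝ) (α : ℝ) (hα : α ∈ Set.Icc (0 : ℝ) 1) (K : ℝ)
    (f : Euc n → ℝ) (hf : ContDiffOn ℝ ((k : ℕ∞) + 2) f (ball (0 : Euc n) 1))
    (heven : ∀ z ∈ ball (0 : Euc n) 1, f (reflY z) = f z)
    (hK : ∀ z ∈ ball (0 : Euc n) 1, ∀ w ∈ ball (0 : Euc n) 1,
      ‖iteratedFDerivWithin ℝ k (d2y f) (ball (0 : Euc n) 1) z -
        iteratedFDerivWithin ℝ k (d2y f) (ball (0 : Euc n) 1) w‖ ≤ K * ‖z - w‖ ^ α)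
    (G : Euc n → ℝ)
    (hG : ∀ z : Euc n, G z =
      if z (Fin.last n) = 0 then d2y f z else pdy f z / z (Fin.last n)) :
    (∀ z ∈ ball (0 : Euc n) 1,
      G z = ∫ s in Set.Ioo (0 : ℝ) 1, d2y f (setY z (s * z (Fin.last n)))) ∧
    ContDiffOn ℝ (k : ℕ∞) G (ball (0 : Euc n) 1) ∧
    (∀ z ∈ ball (0 : Euc n) 1, ∀ w ∈ ball (0 : Euc n) 1,
      ‖iteratedFDerivWithin ℝ k G (ball (0 : Euc n) 1) z -
        iteratedFDerivWithin ℝ k G (ball (0 : Euc n) 1) w‖ ≤ K * ‖z - w‖ ^ α) := by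
  have hg : ContDiffOn ℝ (k : ℕ∞) (d2y f) (ball (0 : Euc n) 1) := contDiffOn_d2y hf
  have hpart1 : ∀ z ∈ ball (0 : Euc n) 1,
      G z = ∫ s in Set.Ioo (0 : ℝ) 1, d2y f (setY z (s * z (Fin.last n))) := fun z hz =>
    key1 hf heven hG hz
  have hGeq : ∀ z ∈ ball (0 : Euc n) 1,
      G z = ∫ s in Set.Ioo (0 : ℝ) 1, d2y f (Lmap n s z) := by
    intro z hz
    rw [hpart1 z hz]
    simp_rw [Lmap_eq_setY]
  have hT : HasFTaylorSeriesUpToOn (k : ℕ∞) G (pser (d2y f)) (ball (0 : Euc n) 1) :=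
    (hasFTaylor_pser hg).congr hGeq
  have hK0 : 0 ≤ K := by
    have hmem : ((1 / 2 : ℝ) • eL n) ∈ ball (0 : Euc n) 1 := by
      rw [mem_ball_zero_iff, norm_smul, norm_eL]
      norm_num
    have h1 := hK 0 (mem_ball_self one_pos) ((1 / 2 : ℝ) • eL n) hmem
    have h2 : (0 : ℝ) ≤ K * ‖(0 : Euc n) - (1 / 2 : ℝ) • eL n‖ ^ α :=
      le_trans (norm_nonneg _) h1
    have h3 : ‖(0 : Euc n) - (1 / 2 : ℝ) • eL n‖ = 1 / 2 := by
      rw [zero_sub, norm_neg, norm_smul, norm_eL]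
      norm_num
    rw [h3] at h2
    have h4 : (0 : ℝ) < (1 / 2 : ℝ) ^ α := Real.rpow_pos_of_pos (by norm_num) α
    nlinarith
  refine ⟨hpart1, hT.contDiffOn, ?_⟩
  intro z hz w hw
  have hz' := hT.eq_iteratedFDerivWithin_of_uniqueDiffOn (m := k)
    (by exact_mod_cast le_rfl) isOpen_ball.uniqueDiffOn hz
  have hw' := hT.eq_iteratedFDerivWithin_of_uniqueDiffOn (m := k)
    (by exact_mod_cast le_rfl) isOpen_ball.uniqueDiffOn hw
  rw [← hz', ← hw']
  exact holder_pser hα.1 hg hK0 hK hz hw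
end
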